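/- The pentagons P₁ and P₂ of the unperturbed dissection share exactly the edge from (0,0) to (a₂, b₂) = ((-3+√3)/2, (3-√3)/2): the segment [(0,0), (a₂,b₂)] is a common side of both, and the interiors of P₁ and P₂ are disjoint. -/
import Mathlib


open Real

/-- Vertex set of the pentagon `P₁`. -/
noncomputable def V₁ : Set (ℝ × ℝ) :=
  {(0, 0), (Real.sqrt 3 / 2, (-3 + 2 * Real.sqrt 3) / 2),
   (1 / 2, Real.sqrt 3 / 2), (-(1 / 2), Real.sqrt 3 / 2),
   ((-3 + Real.sqrt 3) / 2, (3 - Real.sqrt 3) / 2)}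

/-- Vertex set of the pentagon `P₂`. -/
noncomputable def V₂ : Set (ℝ × ℝ) :=
  {(0, 0), ((-3 + Real.sqrt 3) / 2, (3 - Real.sqrt 3) / 2),
   (-1, 0), (-(1 / 2), -(Real.sqrt 3) / 2),
   ((3 - 2 * Real.sqrt 3) / 2, -(Real.sqrt 3) / 2)}

/-- The separating linear functional `f (x, y) = x + y`. -/
noncomputable def fsep : (ℝ × ℝ) →ₗ[ℝ] ℝ :=
  LinearMap.fst ℝ ℝ ℝ + LinearMap.snd ℝ ℝ ℝ

lemma fsep_apply (p : ℝ × ℝ) : fsep p = p.1 + p.2 := rfl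

/-- Face extraction lemma: if `f ≥ 0` on `s` and `f x = 0` for an `x` in the hull,
then `x` is in the hull of the part of `s` where `f = 0`. -/
lemma face_lemma {s : Set (ℝ × ℝ)} (hs : ∀ y ∈ s, 0 ≤ fsep y) {x : ℝ × ℝ}
    (hx : x ∈ convexHull ℝ s) (hfx : fsep x = 0) :
    x ∈ convexHull ℝ {y ∈ s | fsep y = 0} := by
  rw [convexHull_eq] at hx
  obtain ⟨ι, t, w, z, hw₀, hw₁, hz, rfl⟩ := hx
  classical
  have hcm : t.centerMass w z = ∑ i ∈ t, w i • z i :=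
    Finset.centerMass_eq_of_sum_1 _ _ hw₁
  have hsum : ∑ i ∈ t, w i * fsep (z i) = 0 := by
    have := hfx
    rw [hcm] at this
    rw [← this, map_sum]
    simp [smul_eq_mul]
  have hterm : ∀ i ∈ t, w i * fsep (z i) = 0 := by
    intro i hi
    have hnn : ∀ j ∈ t, 0 ≤ w j * fsep (z j) := fun j hj =>
      mul_nonneg (hw₀ j hj) (hs _ (hz j hj))
    exact le_antisymm (hsum ▸ Finset.single_le_sum hnn hi) (hnn i hi)
  rw [← Finset.centerMass_filter_ne_zero z]
  apply Finset.centerMass_mem_convexHull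
  · intro i hi; exact hw₀ i (Finset.mem_filter.mp hi).1
  · rw [Finset.sum_filter_ne_zero, hw₁]; exact zero_lt_one
  · intro i hi
    obtain ⟨hit, hwi⟩ := Finset.mem_filter.mp hi
    refine ⟨hz i hit, ?_⟩
    have := hterm i hit
    rcases mul_eq_zero.mp this with h | h
    · exact absurd h hwi
    · exact h

lemma sqrt3_gt_one : (1 : ℝ) < Real.sqrt 3 := by
  have := Real.sq_sqrt (by norm_num : (3:ℝ) ≥ 0)
  nlinarith [Real.sqrt_nonneg 3]

lemma hull1_nonneg : ∀ p ∈ convexHull ℝ V₁, 0 ≤ fsep p := by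
  intro p hp
  have hconv : Convex ℝ {q : ℝ × ℝ | 0 ≤ fsep q} := by
    intro a ha b hb u v hu hv huv
    simp only [Set.mem_setOf_eq, map_add, map_smul, smul_eq_mul] at *
    have := mul_nonneg hu ha
    have := mul_nonneg hv hb
    linarith
  have hsub : V₁ ⊆ {q : ℝ × ℝ | 0 ≤ fsep q} := by
    intro q hq
    have h1 := sqrt3_gt_one
    rcases hq with h | h | h | h | h <;> subst h <;>
      simp only [Set.mem_setOf_eq, fsep_apply] <;> nlinarith
  exact convexHull_min hsub hconv hp

lemma hull2_nonpos : ∀ p ∈ convexHull ℝ V₂, fsep p ≤ 0 := by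
  intro p hp
  have hconv : Convex ℝ {q : ℝ × ℝ | fsep q ≤ 0} := by
    intro a ha b hb u v hu hv huv
    simp only [Set.mem_setOf_eq, map_add, map_smul, smul_eq_mul] at *
    nlinarith
  have hsub : V₂ ⊆ {q : ℝ × ℝ | fsep q ≤ 0} := by
    intro q hq
    have h1 := sqrt3_gt_one
    have h2 : Real.sqrt 3 ^ 2 = 3 := Real.sq_sqrt (by norm_num)
    rcases hq with h | h | h | h | h <;> subst h <;>
      simp only [Set.mem_setOf_eq, fsep_apply] <;> nlinarith
  exact convexHull_min hsub hconv hp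

lemma V1_face : {y ∈ V₁ | fsep y = 0}
    = ({((0:ℝ), (0:ℝ)), ((-3 + Real.sqrt 3) / 2, (3 - Real.sqrt 3) / 2)} : Set (ℝ × ℝ)) := by
  have h1 := sqrt3_gt_one
  ext q
  constructor
  · rintro ⟨hq, hfq⟩
    rcases hq with h | h | h | h | h <;> subst h <;>
      simp only [fsep_apply] at hfq
    · left; rfl
    · exfalso; nlinarith
    · exfalso; nlinarith
    · exfalso; nlinarith
    · right; rfl
  · rintro (h | h) <;> subst h
    · exact ⟨Or.inl rfl, by simp [fsep_apply]⟩
    · refine ⟨Or.inr (Or.inr (Or.inr (Or.inr rfl))), ?_⟩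
      simp only [fsep_apply]; ring

/-- `P₁` and `P₂` share exactly the edge from `(0,0)` to
`(a₂,b₂) = ((-3+√3)/2, (3-√3)/2)`, and their interiors are disjoint. -/
theorem P1_P2_share_edge :
    convexHull ℝ V₁ ∩ convexHull ℝ V₂
      = segment ℝ ((0 : ℝ), (0 : ℝ)) ((-3 + Real.sqrt 3) / 2, (3 - Real.sqrt 3) / 2) ∧
    Disjoint (interior (convexHull ℝ V₁)) (interior (convexHull ℝ V₂)) := by
  constructor
  · apply Set.Subset.antisymm
    · rintro p ⟨hp1, hp2⟩
      have hzero : fsep p = 0 :=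
        le_antisymm (hull2_nonpos p hp2) (hull1_nonneg p hp1)
      have := face_lemma (s := V₁) (fun y hy => hull1_nonneg y (subset_convexHull ℝ V₁ hy)) hp1 hzero
      rw [V1_face, convexHull_pair] at this
      exact this
    · intro p hp
      have h0 : ((0:ℝ), (0:ℝ)) ∈ V₁ := Or.inl rfl
      have h0' : ((0:ℝ), (0:ℝ)) ∈ V₂ := Or.inl rfl
      have ha : ((-3 + Real.sqrt 3) / 2, (3 - Real.sqrt 3) / 2) ∈ V₁ :=
        Or.inr (Or.inr (Or.inr (Or.inr rfl)))
      have ha' : ((-3 + Real.sqrt 3) / 2, (3 - Real.sqrt 3) / 2) ∈ V₂ :=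
        Or.inr (Or.inl rfl)
      constructor
      · exact segment_subset_convexHull h0 ha hp
      · exact segment_subset_convexHull h0' ha' hp
  · rw [Set.disjoint_left]
    intro p hp1 hp2
    have hp1' : p ∈ convexHull ℝ V₁ := interior_subset hp1
    have hp2' : p ∈ convexHull ℝ V₂ := interior_subset hp2
    have hzero : fsep p = 0 :=
      le_antisymm (hull2_nonpos p hp2') (hull1_nonneg p hp1')
    obtain ⟨ε, hε, hball⟩ := Metric.isOpen_iff.mp isOpen_interior p hp1
    set q : ℝ × ℝ := (p.1 - ε / 2, p.2) with hq
    have hqball : q ∈ Metric.ball p ε := by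
      rw [Metric.mem_ball, Prod.dist_eq]
      simp only [hq, Real.dist_eq]
      rw [max_lt_iff]
      constructor
      · rw [show p.1 - ε/2 - p.1 = -(ε/2) by ring, abs_neg, abs_of_pos (by linarith)]
        linarith
      · simpa using hε
    have hqmem : q ∈ convexHull ℝ V₁ := interior_subset (hball hqball)
    have := hull1_nonneg q hqmem
    rw [fsep_apply] at this hzero
    simp only [hq] at this
    linarith
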